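/- Let (Ω, 𝓕, P) be a probability space with Ω a standard Borel space, K ≥ 1, and let Z : Ω → Fin K and X, Y₀, Y₁ : Ω → Bool be measurable. If Z is independent of the pair ⟨Y₀, Y₁⟩ (IndepFun), then there exists a measurable U : Ω → Bool × Bool (namely U = ⟨Y₀, Y₁⟩) such that U and Z are independent and, for each i : Bool, the map Y_i := if i then Y₁ else Y₀ is conditionally independent of the pair ⟨X, Z⟩ given the σ-algebra generated by U (CondIndepFun). -/
import Mathlib


open MeasureTheory ProbabilityTheory

/-- If `f` is measurable with respect to the conditioning σ-algebra `m'`, then `f` is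
conditionally independent of any measurable `g` given `m'`. -/
lemma condIndepFun_of_comap_le'
    {Ω β γ : Type*} [mβ : MeasurableSpace β] [mγ : MeasurableSpace γ]
    {m' : MeasurableSpace Ω} [mΩ : MeasurableSpace Ω] [StandardBorelSpace Ω]
    (hm' : m' ≤ mΩ) (μ : Measure Ω) [IsFiniteMeasure μ]
    {f : Ω → β} {g : Ω → γ} (hf : Measurable f) (hg : Measurable g)
    (hfm' : MeasurableSpace.comap f mβ ≤ m') :
    CondIndepFun m' hm' f g μ := by
  rw [condIndepFun_iff m' hm' f g hf hg]
  intro t1 t2 ht1 ht2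
  have ht1' : MeasurableSet[m'] t1 := hfm' _ ht1
  have h1 : (μ⟦t1 | m'⟧) =ᵐ[μ] t1.indicator fun _ => (1 : ℝ) :=
    Filter.EventuallyEq.of_eq <| condExp_of_stronglyMeasurable hm'
      ((stronglyMeasurable_const (β := ℝ)).indicator ht1')
      ((integrable_const (1 : ℝ)).indicator (hm' _ ht1'))
  have h2 : (μ⟦t1 ∩ t2 | m'⟧) =ᵐ[μ] t1.indicator (μ⟦t2 | m'⟧) := by
    have hrw : (t1 ∩ t2).indicator (fun _ => (1 : ℝ))
        = t1.indicator (t2.indicator fun _ => (1 : ℝ)) := by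
      rw [Set.indicator_indicator]
    rw [hrw]
    exact condExp_indicator
      ((integrable_const (1 : ℝ)).indicator (hg.comap_le _ ht2)) ht1'
  refine h2.trans ?_
  filter_upwards [h1] with ω hω
  by_cases hmem : ω ∈ t1 <;>
    simp [Set.indicator, hmem, hω, Pi.mul_apply]

/-- The containment M₂ ⊆ M₄ of Lemma 1 of the paper: if `Z` is independent of the pair
of potential outcomes `(Y₀, Y₁)`, then taking `U = (Y₀, Y₁)` witnesses the
unobserved-confounder model (iv): `U ⫫ Z` and `Y(x_i) ⫫ (X, Z) | U` for each `i`. -/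
theorem iv_M2_subset_M4
    {Ω : Type*} [MeasurableSpace Ω] [StandardBorelSpace Ω]
    (P : Measure Ω) [IsProbabilityMeasure P]
    {K : ℕ} (hK : 1 ≤ K)
    (Z : Ω → Fin K) (X Y₀ Y₁ : Ω → Bool)
    (hZ : Measurable Z) (hX : Measurable X)
    (hY₀ : Measurable Y₀) (hY₁ : Measurable Y₁)
    (hind : IndepFun Z (fun ω => (Y₀ ω, Y₁ ω)) P) :
    ∃ (U : Ω → Bool × Bool) (hU : Measurable U),
      U = (fun ω => (Y₀ ω, Y₁ ω)) ∧
      IndepFun U Z P ∧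
      ∀ i : Bool,
        CondIndepFun (MeasurableSpace.comap U inferInstance) hU.comap_le
          (fun ω => if i then Y₁ ω else Y₀ ω) (fun ω => (X ω, Z ω)) P := by
  refine ⟨fun ω => (Y₀ ω, Y₁ ω), hY₀.prodMk hY₁, rfl, hind.symm, fun i => ?_⟩
  cases i with
  | false =>
      refine condIndepFun_of_comap_le' _ P (by simpa using hY₀) (hX.prodMk hZ) ?_
      rintro t ⟨s, hs, rfl⟩
      exact ⟨Prod.fst ⁻¹' s, measurable_fst hs, by ext ω; simp⟩
  | true =>
      refine condIndepFun_of_comap_le' _ P (by simpa using hY₁) (hX.prodMk hZ) ?_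
      rintro t ⟨s, hs, rfl⟩
      exact ⟨Prod.snd ⁻¹' s, measurable_snd hs, by ext ω; simp⟩
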